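/- arXiv:1103.5239 — 2 statements merged into one kernel-verified Lean document; each statement's English description precedes it below -/
import Mathlib

section
/- The complete bipartite graph K_{3,3} admits a coherent 4-cycle orientation of level 3; that is, one can choose, for each of the nine 4-cycles of K_{3,3}, one of its two directions so that every path v_0, v_1, v_2 on 3 distinct vertices with consecutive vertices adjacent occurs as a consecutive segment of exactly one chosen directed 4-cycle. -/
/-- A directed `g`-cycle of a simple graph `G`: an injective map `c : ZMod g → V`
with `c i` adjacent to `c (i+1)` for all `i`. -/
def IsDirCycleOn {V : Type*} (G : SimpleGraph V) (g : ℕ) (c : ZMod g → V) : Prop :=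
  Function.Injective c ∧ ∀ i : ZMod g, G.Adj (c i) (c (i + 1))

/-- A sequence of `k` distinct vertices with consecutive vertices adjacent. -/
def IsPathSeq {V : Type*} (G : SimpleGraph V) (k : ℕ) (v : Fin k → V) : Prop :=
  Function.Injective v ∧ ∀ (j : ℕ) (h : j + 1 < k),
    G.Adj (v ⟨j, Nat.lt_of_succ_lt h⟩) (v ⟨j + 1, h⟩)

/-- A coherent `g`-cycle orientation of level `k` of `G`: a set `D` of directed
`g`-cycles of `G` containing, for every `g`-cycle of `G`, exactly one of its two
directions (one representative up to rotation), and such that every sequence of `k`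
distinct vertices `v 0, …, v (k-1)` with consecutive vertices adjacent occurs as a
consecutive segment `(c i, c (i+1), …, c (i+k-1))` of exactly one `c ∈ D`. -/
def IsCoherentOrientation {V : Type*} (G : SimpleGraph V) (g k : ℕ)
    (D : Set (ZMod g → V)) : Prop :=
  (∀ c ∈ D, IsDirCycleOn G g c) ∧
  (∀ c : ZMod g → V, IsDirCycleOn G g c →
    ∃! c', c' ∈ D ∧
      ((∃ r : ZMod g, ∀ i, c' i = c (i + r)) ∨ (∃ r : ZMod g, ∀ i, c' i = c (r - i)))) ∧
  (∀ v : Fin k → V, IsPathSeq G k v →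
    ∃! c, c ∈ D ∧ ∃ i : ZMod g, ∀ j : Fin k, c (i + ((j : ℕ) : ZMod g)) = v j)

/-!
A 4-cycle of `K_{3,3}` uses two vertices on each side, so it is determined by the left vertex `i`
and the right vertex `j` it avoids. Orient it so that on each side it steps from `x` to `x + 1`
in `Fin 3`; this gives the cycle `k33Cycle (i, j)`. A path `a - b - c` has `a` and `c` on the same
side: they determine the avoided vertex on that side and, through `c = a + 1` or `c = a - 1`, the
position of the path on the oriented cycle, after which `b` determines the avoided vertex on the
other side. So each path lies on exactly one chosen cycle. This, and that each 4-cycle has exactly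
one chosen direction, is checked by evaluation over all tuples of vertices.
-/

open Function

instance {α : Type*} [Fintype α] [DecidableEq α] (p : α → Prop) [DecidablePred p] :
    Decidable (∃! a, p a) :=
  inferInstanceAs (Decidable (∃ a, p a ∧ ∀ b, p b → b = a))

instance (V W : Type*) : DecidableRel (completeBipartiteGraph V W).Adj :=
  fun _ _ => inferInstanceAs (Decidable (_ ∨ _))

instance {V : Type*} [DecidableEq V] (G : SimpleGraph V) [DecidableRel G.Adj] (g : ℕ) [NeZero g]
    (c : ZMod g → V) : Decidable (IsDirCycleOn G g c) :=
  inferInstanceAs (Decidable (_ ∧ _))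

theorem isPathSeq_three_iff {V : Type*} {G : SimpleGraph V} {v : Fin 3 → V} :
    IsPathSeq G 3 v ↔ Injective v ∧ G.Adj (v 0) (v 1) ∧ G.Adj (v 1) (v 2) := by
  refine ⟨fun ⟨hinj, hadj⟩ => ⟨hinj, hadj 0 (by norm_num), hadj 1 (by norm_num)⟩, ?_⟩
  rintro ⟨hinj, h01, h12⟩
  refine ⟨hinj, fun j hj => ?_⟩
  rcases j with _ | _ | j
  exacts [h01, h12, by omega]

theorem existsUnique_mem_range_and {ι α : Type*} {f : ι → α} {P : α → Prop}
    (h : ∃! i, P (f i)) : ∃! a, a ∈ Set.range f ∧ P a := by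
  obtain ⟨i, hi, huniq⟩ := h
  refine ⟨f i, ⟨⟨i, rfl⟩, hi⟩, ?_⟩
  rintro _ ⟨⟨j, rfl⟩, hj⟩
  rw [huniq j hj]

/-- Typed on `ZMod 4` rather than `Fin 4`: instance search does not unfold `ZMod 4`, so the
decidability instances for functions on `ZMod 4` would not apply to `![a, b, c, d]`. -/
def ZMod.tuple4 {α : Type*} (a b c d : α) : ZMod 4 → α := ![a, b, c, d]

theorem ZMod.forall_fun_four_iff {α : Type*} {P : (ZMod 4 → α) → Prop} :
    (∀ c, P c) ↔ ∀ a b c d, P (ZMod.tuple4 a b c d) := by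
  refine ⟨fun h a b c d => h _, fun h c => ?_⟩
  convert h (c 0) (c 1) (c 2) (c 3)
  exact (FinVec.etaExpand_eq c).symm

local notation "K₃₃" => completeBipartiteGraph (Fin 3) (Fin 3)

def k33Cycle (p : Fin 3 × Fin 3) : ZMod 4 → Fin 3 ⊕ Fin 3 :=
  ![.inl (p.1 + 1), .inr (p.2 + 1), .inl (p.1 + 2), .inr (p.2 + 2)]

theorem isDirCycleOn_k33Cycle : ∀ p, IsDirCycleOn K₃₃ 4 (k33Cycle p) := by
  decide

theorem existsUnique_k33Cycle_rotation_or_reflection : ∀ c : ZMod 4 → Fin 3 ⊕ Fin 3,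
    IsDirCycleOn K₃₃ 4 c →
    ∃! p, (∃ r : ZMod 4, ∀ i, k33Cycle p i = c (i + r)) ∨
      ∃ r : ZMod 4, ∀ i, k33Cycle p i = c (r - i) := by
  rw [ZMod.forall_fun_four_iff]
  decide

theorem existsUnique_k33Cycle_segment : ∀ v : Fin 3 → Fin 3 ⊕ Fin 3, IsPathSeq K₃₃ 3 v →
    ∃! p, ∃ r : ZMod 4, ∀ s : Fin 3, k33Cycle p (r + ((s : ℕ) : ZMod 4)) = v s := by
  simp only [isPathSeq_three_iff]
  refine (FinVec.forall_iff _).mp ?_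
  simp only [FinVec.Forall]
  decide

/-- The complete bipartite graph `K_{3,3}` admits a coherent 4-cycle orientation of
level 3. -/
theorem k33_coherent_orientation :
    ∃ D : Set (ZMod 4 → (Fin 3 ⊕ Fin 3)),
      IsCoherentOrientation (completeBipartiteGraph (Fin 3) (Fin 3)) 4 3 D := by
  refine ⟨Set.range k33Cycle, ?_, fun c hc => ?_, fun v hv => ?_⟩
  · rintro _ ⟨p, rfl⟩
    exact isDirCycleOn_k33Cycle p
  · exact existsUnique_mem_range_and (existsUnique_k33Cycle_rotation_or_reflection c hc)
  · exact existsUnique_mem_range_and (existsUnique_k33Cycle_segment v hv)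
end

section
/- In the Heawood graph, every edge lies on exactly eight cycles of length 6. -/
/-- Two directed `g`-cycles are related iff one is a rotation of the other or a
rotation of the reversal of the other; the quotient by this relation is the set of
(undirected) `g`-cycles of `G`. -/
def DirCycleRel {V : Type*} (G : SimpleGraph V) (g : ℕ)
    (c c' : {c : ZMod g → V // IsDirCycleOn G g c}) : Prop :=
  (∃ r : ZMod g, ∀ i, c'.1 i = c.1 (i + r)) ∨ (∃ r : ZMod g, ∀ i, c'.1 i = c.1 (r - i))

/-- The Heawood graph: vertex set `ZMod 14`, `i` adjacent to `i+1`, together with the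
extra edges `{2x, 2x+5}` for every `x`. -/
def heawoodGraph : SimpleGraph (ZMod 14) :=
  SimpleGraph.fromRel (fun i j =>
    j = i + 1 ∨ ∃ x : ZMod 14, i = 2 * x ∧ j = 2 * x + 5)

/-!
Each hexagon through the edge `uw` has exactly one directed, rotated representative of the form
`u → w → a → b → c → d → u`, so it suffices to count the tuples `(a, b, c, d)` closing such a
path. The Heawood graph is cubic, the neighbours of `v` being `v ± 1` and `v + 5` or `v - 5`
according to the parity of `v`, so these tuples can be enumerated along adjacency lists; for
every edge there are eight.
-/

section DirCycles

variable {V : Type*} {G : SimpleGraph V} {g : ℕ}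

theorem dirCycleRel_equivalence : Equivalence (DirCycleRel G g) where
  refl _ := Or.inl ⟨0, fun i => by rw [add_zero]⟩
  symm := by
    rintro c c' (⟨r, hr⟩ | ⟨r, hr⟩)
    · exact Or.inl ⟨-r, fun i => by rw [hr, neg_add_cancel_right]⟩
    · exact Or.inr ⟨r, fun i => by rw [hr, sub_sub_cancel]⟩
  trans := by
    rintro c c' c'' (⟨r, hr⟩ | ⟨r, hr⟩) (⟨s, hs⟩ | ⟨s, hs⟩)
    · exact Or.inl ⟨s + r, fun i => by rw [hs, hr, add_assoc]⟩
    · exact Or.inr ⟨s + r, fun i => by rw [hs, hr]; exact congrArg _ (by ring)⟩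
    · exact Or.inr ⟨r - s, fun i => by rw [hs, hr]; exact congrArg _ (by ring)⟩
    · exact Or.inl ⟨r - s, fun i => by rw [hs, hr]; exact congrArg _ (by ring)⟩

theorem IsDirCycleOn.rotate {c : ZMod g → V} (hc : IsDirCycleOn G g c) (r : ZMod g) :
    IsDirCycleOn G g (fun i => c (i + r)) :=
  ⟨fun _ _ h => add_right_cancel (hc.1 h),
    fun i => by simpa only [add_right_comm] using hc.2 (i + r)⟩

/-- A reflection fixing `c 0` and `c 1` forces `-1 = 1` in `ZMod g`, and then `i ↦ -i` is the
identity. -/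
theorem DirCycleRel.eq_of_apply_zero_of_apply_one {c c' : {c : ZMod g → V // IsDirCycleOn G g c}}
    (h : DirCycleRel G g c c') (h0 : c'.1 0 = c.1 0) (h1 : c'.1 1 = c.1 1) : c' = c := by
  rcases h with ⟨r, hr⟩ | ⟨r, hr⟩
  · have hr0 : r = 0 := by simpa using c.2.1 ((hr 0).symm.trans h0)
    exact Subtype.ext (funext fun i => by rw [hr, hr0, add_zero])
  · have hr0 : r = 0 := by simpa using c.2.1 ((hr 0).symm.trans h0)
    have hneg : (-1 : ZMod g) = 1 := by simpa [hr0] using c.2.1 ((hr 1).symm.trans h1)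
    refine Subtype.ext (funext fun i => ?_)
    rw [hr, hr0, zero_sub, ← neg_one_mul, hneg, one_mul]

theorem card_cycles_through_edge_eq_card_rooted (u w : V) :
    Nat.card {q : Quot (DirCycleRel G g) //
      ∃ c : {c : ZMod g → V // IsDirCycleOn G g c},
        q = Quot.mk _ c ∧ ∃ i : ZMod g, c.1 i = u ∧ c.1 (i + 1) = w} =
    Nat.card {c : ZMod g → V // IsDirCycleOn G g c ∧ c 0 = u ∧ c 1 = w} := by
  refine (Nat.card_eq_of_bijective
    (fun c => ⟨Quot.mk _ ⟨c.1, c.2.1⟩, ⟨c.1, c.2.1⟩, rfl, 0, c.2.2.1, by rw [zero_add, c.2.2.2]⟩)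
    ⟨fun c c' h => ?_, ?_⟩).symm
  · have hrel : DirCycleRel G g ⟨c.1, c.2.1⟩ ⟨c'.1, c'.2.1⟩ :=
      dirCycleRel_equivalence.eqvGen_iff.mp (Quot.eqvGen_exact (congrArg Subtype.val h))
    have heq := hrel.eq_of_apply_zero_of_apply_one (c'.2.2.1.trans c.2.2.1.symm)
      (c'.2.2.2.trans c.2.2.2.symm)
    exact Subtype.ext (congrArg Subtype.val heq).symm
  · rintro ⟨q, c, rfl, i, hu, hw⟩
    let c' : {c : ZMod g → V // IsDirCycleOn G g c} := ⟨fun j => c.1 (j + i), c.2.rotate i⟩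
    have hrel : DirCycleRel G g c c' := Or.inl ⟨i, fun _ => rfl⟩
    exact ⟨⟨c'.1, c'.2, by simpa [c'] using hu, by rw [← hw]; exact congrArg c.1 (add_comm 1 i)⟩,
      Subtype.ext (Quot.sound hrel).symm⟩

end DirCycles

section Hexagons

variable {V : Type*} (G : SimpleGraph V)

def hexagonOf (u w : V) (t : V × V × V × V) : ZMod 6 → V :=
  ![u, w, t.1, t.2.1, t.2.2.1, t.2.2.2]

theorem isDirCycleOn_hexagonOf_iff {u w a b c d : V} :
    IsDirCycleOn G 6 (hexagonOf u w (a, b, c, d)) ↔ [u, w, a, b, c, d].Nodup ∧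
      G.Adj u w ∧ G.Adj w a ∧ G.Adj a b ∧ G.Adj b c ∧ G.Adj c d ∧ G.Adj d u := by
  have hnodup : Function.Injective (hexagonOf u w (a, b, c, d)) ↔ [u, w, a, b, c, d].Nodup :=
    List.nodup_ofFn.symm
  rw [IsDirCycleOn, hnodup]
  refine and_congr_right fun _ => ⟨fun h => ⟨h 0, h 1, h 2, h 3, h 4, h 5⟩, ?_⟩
  rintro ⟨h0, h1, h2, h3, h4, h5⟩ i
  fin_cases i <;> assumption

theorem hexagonOf_eta (c : ZMod 6 → V) : hexagonOf (c 0) (c 1) (c 2, c 3, c 4, c 5) = c := by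
  funext i
  fin_cases i <;> rfl

def rootedHexagonEquiv (u w : V) :
    {c : ZMod 6 → V // IsDirCycleOn G 6 c ∧ c 0 = u ∧ c 1 = w} ≃
      {t : V × V × V × V // IsDirCycleOn G 6 (hexagonOf u w t)} where
  toFun c := ⟨(c.1 2, c.1 3, c.1 4, c.1 5), by
    obtain ⟨c, hc, rfl, rfl⟩ := c
    rwa [hexagonOf_eta]⟩
  invFun t := ⟨hexagonOf u w t.1, t.2, rfl, rfl⟩
  left_inv c := by
    obtain ⟨c, hc, rfl, rfl⟩ := c
    exact Subtype.ext (hexagonOf_eta c)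
  right_inv t := rfl

end Hexagons

section AdjacencyLists

variable {V : Type*} [DecidableEq V]

def hexagonCompletions (N : V → List V) (u w : V) : List (V × V × V × V) :=
  (N w).flatMap fun a => (N a).flatMap fun b => (N b).flatMap fun c =>
    ((N c).filter fun d => [u, w, a, b, c, d].Nodup ∧ u ∈ N d).map fun d => (a, b, c, d)

variable {G : SimpleGraph V} {N : V → List V}

theorem mem_hexagonCompletions_iff (hN : ∀ v x, G.Adj v x ↔ x ∈ N v) {u w : V}
    (huw : G.Adj u w) {t : V × V × V × V} :
    t ∈ hexagonCompletions N u w ↔ IsDirCycleOn G 6 (hexagonOf u w t) := by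
  obtain ⟨a, b, c, d⟩ := t
  simp only [hexagonCompletions, List.mem_flatMap, List.mem_map, List.mem_filter, Prod.mk.injEq,
    decide_eq_true_eq, isDirCycleOn_hexagonOf_iff, hN]
  constructor
  · rintro ⟨a, ha, b, hb, c, hc, d, ⟨hd, hnodup, hdu⟩, rfl, rfl, rfl, rfl⟩
    exact ⟨hnodup, (hN u w).1 huw, ha, hb, hc, hd, hdu⟩
  · rintro ⟨hnodup, -, ha, hb, hc, hd, hdu⟩
    exact ⟨a, ha, b, hb, c, hc, d, ⟨hd, hnodup, hdu⟩, rfl, rfl, rfl, rfl⟩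

theorem card_rooted_hexagons_eq_card_hexagonCompletions (hN : ∀ v x, G.Adj v x ↔ x ∈ N v)
    {u w : V} (huw : G.Adj u w) :
    Nat.card {c : ZMod 6 → V // IsDirCycleOn G 6 c ∧ c 0 = u ∧ c 1 = w} =
      (hexagonCompletions N u w).toFinset.card := by
  rw [Nat.card_congr (rootedHexagonEquiv G u w), ← Nat.card_eq_finsetCard]
  exact Nat.card_congr <| Equiv.subtypeEquivRight fun t => by
    rw [List.mem_toFinset, mem_hexagonCompletions_iff hN huw]

end AdjacencyLists

def heawoodNeighbors (v : ZMod 14) : List (ZMod 14) :=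
  [v + 1, v - 1, if v.val % 2 = 0 then v + 5 else v - 5]

theorem heawoodGraph_adj_iff (v x : ZMod 14) : heawoodGraph.Adj v x ↔ x ∈ heawoodNeighbors v := by
  revert v x
  simp only [heawoodGraph, SimpleGraph.fromRel_adj]
  decide

theorem card_toFinset_hexagonCompletions_heawood :
    ∀ u, ∀ w ∈ heawoodNeighbors u,
      (hexagonCompletions heawoodNeighbors u w).toFinset.card = 8 := by
  decide +kernel

/-- In the Heawood graph, every edge lies on exactly eight cycles of length 6
(an edge lies on a cycle iff its endpoints occur consecutively along the cycle). -/
theorem heawood_edge_on_eight_hexagons (u w : ZMod 14) (huw : heawoodGraph.Adj u w) :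
    Nat.card {q : Quot (DirCycleRel heawoodGraph 6) //
      ∃ c : {c : ZMod 6 → ZMod 14 // IsDirCycleOn heawoodGraph 6 c},
        q = Quot.mk _ c ∧ ∃ i : ZMod 6, c.1 i = u ∧ c.1 (i + 1) = w} = 8 := by
  rw [card_cycles_through_edge_eq_card_rooted,
    card_rooted_hexagons_eq_card_hexagonCompletions heawoodGraph_adj_iff huw]
  exact card_toFinset_hexagonCompletions_heawood u w ((heawoodGraph_adj_iff u w).1 huw)
end
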